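/- arXiv:2002.02647 — 6 statements merged into one kernel-verified Lean document; each statement's English description precedes it below -/
import Mathlib

section
/- Let (C,‖·|) be a normed cone and φ : C → ℝ a linear functional. The following are equivalent: (i) φ is upper semicontinuous for the forward topology of the extended quasi-metric d_e induced by the conic norm; (ii) φ is semi-Lipschitz on (C, d_e); (iii) there exists M ≥ 0 such that φ(x) ≤ M‖x| for all x ∈ C. -/
open scoped NNReal ENNReal
open Filter

/-- The extended quasi-metric induced by a conic norm on a cone. -/
noncomputable def coneQuasiDist {C : Type*} [AddCommMonoid C] (n : C → ℝ) (x y : C) : ℝ≥0∞ :=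
  sInf {e : ℝ≥0∞ | ∃ z : C, y = x + z ∧ e = ENNReal.ofReal (n z)}

/-- The forward topology of the extended quasi-metric induced by a conic norm. -/
def forwardTop {C : Type*} [AddCommMonoid C] (n : C → ℝ) : TopologicalSpace C :=
  TopologicalSpace.generateFrom
    {B | ∃ (x : C) (r : ℝ≥0∞), 0 < r ∧ B = {y | coneQuasiDist n x y < r}}

/- For a linear functional, semi-Lipschitz continuity and the bound `φ x ≤ M ‖x|` are the same
statement, since `d_e(y, y + z) ≤ ‖z|` and `φ (y + z) - φ y = φ z`.  Semi-Lipschitz functions are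
upper semicontinuous because forward balls are neighbourhoods.  Conversely, upper semicontinuity
at `0` gives `φ < 1` on a forward ball `{w | ‖w| < δ}`, and rescaling any `x` into that ball gives
`φ x ≤ δ⁻¹ ‖x|`. -/

section ConeQuasiDist

variable {C : Type*} [AddCommMonoid C] (n : C → ℝ)

lemma coneQuasiDist_add_le (x z : C) : coneQuasiDist n x (x + z) ≤ ENNReal.ofReal (n z) :=
  sInf_le ⟨z, rfl, rfl⟩

lemma le_coneQuasiDist {a : ℝ≥0∞} {x y : C} (h : ∀ z, y = x + z → a ≤ ENNReal.ofReal (n z)) :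
    a ≤ coneQuasiDist n x y :=
  le_sInf <| by
    rintro _ ⟨z, hz, rfl⟩
    exact h z hz

variable {n}

lemma coneQuasiDist_triangle (hnn : ∀ x, 0 ≤ n x) (hadd : ∀ x y, n (x + y) ≤ n x + n y)
    (x y w : C) : coneQuasiDist n x w ≤ coneQuasiDist n x y + coneQuasiDist n y w := by
  rw [coneQuasiDist.eq_1 n x y, ENNReal.sInf_add]
  refine le_iInf₂ ?_
  rintro _ ⟨z₁, rfl, rfl⟩
  rw [add_comm, coneQuasiDist.eq_1 n (x + z₁) w, ENNReal.sInf_add]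
  refine le_iInf₂ ?_
  rintro _ ⟨z₂, rfl, rfl⟩
  calc coneQuasiDist n x (x + z₁ + z₂)
      = coneQuasiDist n x (x + (z₁ + z₂)) := by rw [add_assoc]
    _ ≤ ENNReal.ofReal (n (z₁ + z₂)) := coneQuasiDist_add_le n x _
    _ ≤ ENNReal.ofReal (n z₁ + n z₂) := ENNReal.ofReal_le_ofReal (hadd z₁ z₂)
    _ = ENNReal.ofReal (n z₂) + ENNReal.ofReal (n z₁) := by
        rw [ENNReal.ofReal_add (hnn z₁) (hnn z₂), add_comm]

lemma isOpen_forwardBall (x : C) {r : ℝ≥0∞} (hr : 0 < r) :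
    @IsOpen C (forwardTop n) {y | coneQuasiDist n x y < r} :=
  TopologicalSpace.GenerateOpen.basic _ ⟨x, r, hr, rfl⟩

lemma exists_forwardBall_subset_of_isOpen (hnn : ∀ x, 0 ≤ n x)
    (hadd : ∀ x y, n (x + y) ≤ n x + n y) {V : Set C} (hV : @IsOpen C (forwardTop n) V)
    {x : C} (hx : x ∈ V) : ∃ r, 0 < r ∧ {y | coneQuasiDist n x y < r} ⊆ V := by
  induction hV generalizing x with
  | basic B hB =>
    obtain ⟨x₀, r₀, -, rfl⟩ := hB
    have hx₀ : coneQuasiDist n x₀ x < r₀ := hx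
    refine ⟨r₀ - coneQuasiDist n x₀ x, tsub_pos_of_lt hx₀, fun y hy => ?_⟩
    calc coneQuasiDist n x₀ y ≤ coneQuasiDist n x₀ x + coneQuasiDist n x y :=
          coneQuasiDist_triangle hnn hadd x₀ x y
      _ < coneQuasiDist n x₀ x + (r₀ - coneQuasiDist n x₀ x) :=
          ENNReal.add_lt_add_left (hx₀.trans_le le_top).ne hy
      _ = r₀ := add_tsub_cancel_of_le hx₀.le
  | univ => exact ⟨1, one_pos, Set.subset_univ _⟩
  | inter s t _ _ ihs iht =>
    obtain ⟨r₁, hr₁, hs⟩ := ihs hx.1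
    obtain ⟨r₂, hr₂, ht⟩ := iht hx.2
    refine ⟨min r₁ r₂, lt_min hr₁ hr₂, Set.subset_inter (subset_trans ?_ hs) (subset_trans ?_ ht)⟩
    · exact Set.ofPred_subset_ofPred.mpr fun y hy => hy.trans_le (min_le_left _ _)
    · exact Set.ofPred_subset_ofPred.mpr fun y hy => hy.trans_le (min_le_right _ _)
  | sUnion S _ ih =>
    obtain ⟨s, hs, hxs⟩ := hx
    obtain ⟨r, hr, hsub⟩ := ih s hs hxs
    exact ⟨r, hr, hsub.trans (Set.subset_sUnion_of_mem hs)⟩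

lemma forwardTop_nhds_hasBasis (hn0 : n 0 = 0) (hnn : ∀ x, 0 ≤ n x)
    (hadd : ∀ x y, n (x + y) ≤ n x + n y) (x : C) :
    (@nhds C (forwardTop n) x).HasBasis (fun r => 0 < r) (fun r => {y | coneQuasiDist n x y < r}) := by
  let _ := forwardTop n
  refine ⟨fun U => ⟨fun hU => ?_, ?_⟩⟩
  · obtain ⟨V, hVU, hV, hxV⟩ := mem_nhds_iff.mp hU
    obtain ⟨r, hr, hsub⟩ := exists_forwardBall_subset_of_isOpen hnn hadd hV hxV
    exact ⟨r, hr, hsub.trans hVU⟩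
  · rintro ⟨r, hr, hsub⟩
    refine mem_of_superset ?_ hsub
    have hxx : coneQuasiDist n x x < r := by
      simpa [hn0] using (coneQuasiDist_add_le n x 0).trans_lt (by simpa [hn0] using hr)
    exact (isOpen_forwardBall x hr).mem_nhds hxx

lemma tendsto_coneQuasiDist_nhds_zero (hn0 : n 0 = 0) (hnn : ∀ x, 0 ≤ n x)
    (hadd : ∀ x y, n (x + y) ≤ n x + n y) (x : C) :
    Tendsto (coneQuasiDist n x) (@nhds C (forwardTop n) x) (nhds 0) := by
  rw [(forwardTop_nhds_hasBasis hn0 hnn hadd x).tendsto_iff ENNReal.nhds_zero_basis]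
  exact fun r hr => ⟨r, hr, fun _ hy => hy⟩

end ConeQuasiDist

section LinearFunctional

variable {C : Type*} [AddCommMonoid C] {n : C → ℝ} {φ : C → ℝ}

-- `L ≠ 0` matters where `y` does not lie below `x`: there `d_e(y, x) = ⊤` but `0 * ⊤ = 0`.
lemma semiLipschitz_of_le_mul (hφadd : ∀ x y, φ (x + y) = φ x + φ y) {L : ℝ≥0} (hL : L ≠ 0)
    (hφ : ∀ z, φ z ≤ L * n z) (x y : C) :
    ENNReal.ofReal (φ x - φ y) ≤ (L : ℝ≥0∞) * coneQuasiDist n y x := by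
  have hL₀ : (L : ℝ≥0∞) ≠ 0 := ENNReal.coe_ne_zero.mpr hL
  rw [mul_comm, ← ENNReal.div_le_iff hL₀ ENNReal.coe_ne_top]
  refine le_coneQuasiDist n fun z hz => ?_
  rw [ENNReal.div_le_iff hL₀ ENNReal.coe_ne_top, hz, hφadd, add_sub_cancel_left,
    ← ENNReal.ofReal_coe_nnreal, ← ENNReal.ofReal_mul' L.coe_nonneg, mul_comm]
  exact ENNReal.ofReal_le_ofReal (hφ z)

lemma le_mul_of_semiLipschitz (hnn : ∀ x, 0 ≤ n x) (hφ0 : φ 0 = 0) {L : ℝ≥0}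
    (hL : ∀ x y, ENNReal.ofReal (φ x - φ y) ≤ (L : ℝ≥0∞) * coneQuasiDist n y x) (x : C) :
    φ x ≤ L * n x := by
  have hd : coneQuasiDist n 0 x ≤ ENNReal.ofReal (n x) := by
    simpa using coneQuasiDist_add_le n 0 x
  have h := (hL x 0).trans
    (by gcongr : (L : ℝ≥0∞) * coneQuasiDist n 0 x ≤ L * ENNReal.ofReal (n x))
  rw [hφ0, sub_zero, ← ENNReal.ofReal_coe_nnreal, ← ENNReal.ofReal_mul L.coe_nonneg] at h
  exact (ENNReal.ofReal_le_ofReal_iff (mul_nonneg L.coe_nonneg (hnn x))).mp h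

lemma upperSemicontinuous_of_semiLipschitz (hn0 : n 0 = 0) (hnn : ∀ x, 0 ≤ n x)
    (hadd : ∀ x y, n (x + y) ≤ n x + n y) {L : ℝ≥0}
    (hL : ∀ x y, ENNReal.ofReal (φ x - φ y) ≤ (L : ℝ≥0∞) * coneQuasiDist n y x) :
    @UpperSemicontinuous C ℝ (forwardTop n) _ φ := by
  intro x t ht
  have hLd := ENNReal.Tendsto.const_mul (a := (L : ℝ≥0∞))
    (tendsto_coneQuasiDist_nhds_zero hn0 hnn hadd x) (Or.inr ENNReal.coe_ne_top)
  rw [mul_zero] at hLd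
  filter_upwards [hLd.eventually (gt_mem_nhds (ENNReal.ofReal_pos.mpr (sub_pos.mpr ht)))]
    with y hy
  linarith [(ENNReal.ofReal_lt_ofReal_iff'.mp ((hL y x).trans_lt hy)).1]

lemma exists_pos_forall_lt_one_of_upperSemicontinuous (hn0 : n 0 = 0) (hnn : ∀ x, 0 ≤ n x)
    (hadd : ∀ x y, n (x + y) ≤ n x + n y) (hφ0 : φ 0 = 0)
    (h : @UpperSemicontinuous C ℝ (forwardTop n) _ φ) :
    ∃ δ : ℝ, 0 < δ ∧ ∀ w, n w < δ → φ w < 1 := by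
  obtain ⟨r, hr, hsub⟩ := (forwardTop_nhds_hasBasis hn0 hnn hadd 0).mem_iff.mp
    (h 0 1 (by norm_num [hφ0]))
  obtain ⟨δ, -, hδ, hδr⟩ := ENNReal.lt_iff_exists_real_btwn.mp hr
  have hδ₀ : 0 < δ := ENNReal.ofReal_pos.mp hδ
  refine ⟨δ, hδ₀, fun w hw => hsub ?_⟩
  calc coneQuasiDist n 0 w ≤ ENNReal.ofReal (n w) := by simpa using coneQuasiDist_add_le n 0 w
    _ < ENNReal.ofReal δ := (ENNReal.ofReal_lt_ofReal_iff hδ₀).mpr hw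
    _ < r := hδr

lemma le_inv_mul_of_forall_lt_one [Module ℝ≥0 C] (hnn : ∀ x, 0 ≤ n x)
    (hsmul : ∀ (r : ℝ≥0) (x : C), n (r • x) = (r : ℝ) * n x)
    (hφsmul : ∀ (r : ℝ≥0) (x : C), φ (r • x) = (r : ℝ) * φ x)
    {δ : ℝ} (hδ : 0 < δ) (h : ∀ w, n w < δ → φ w < 1) (x : C) : φ x ≤ δ⁻¹ * n x := by
  refine le_of_forall_pos_lt_add fun ε hε => ?_
  set s := δ⁻¹ * n x + ε
  have hs : 0 < s := by have := hnn x; positivity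
  have hc : ((s⁻¹).toNNReal : ℝ) = s⁻¹ := Real.coe_toNNReal _ (inv_nonneg.mpr hs.le)
  have hscaled := h ((s⁻¹).toNNReal • x) ?_
  · rwa [hφsmul, hc, inv_mul_lt_iff₀ hs, mul_one] at hscaled
  · rw [hsmul, hc, inv_mul_lt_iff₀ hs]
    have hsδ : s * δ = n x + ε * δ := by simp only [s]; field_simp
    nlinarith

end LinearFunctional

theorem linear_functional_usc_iff_semiLipschitz_iff_bounded_general
    {C : Type*} [AddCommMonoid C] [Module ℝ≥0 C] (n : C → ℝ)
    (hnn : ∀ x, 0 ≤ n x)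
    (hadd : ∀ x y, n (x + y) ≤ n x + n y)
    (hsmul : ∀ (r : ℝ≥0) (x : C), n (r • x) = (r : ℝ) * n x)
    (φ : C → ℝ)
    (hφadd : ∀ x y, φ (x + y) = φ x + φ y)
    (hφsmul : ∀ (r : ℝ≥0) (x : C), φ (r • x) = (r : ℝ) * φ x) :
    ((@UpperSemicontinuous C ℝ (forwardTop n) _ φ) ↔
      (∃ L : ℝ≥0, ∀ x y : C,
        ENNReal.ofReal (φ x - φ y) ≤ (L : ℝ≥0∞) * coneQuasiDist n y x)) ∧
    ((∃ L : ℝ≥0, ∀ x y : C,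
        ENNReal.ofReal (φ x - φ y) ≤ (L : ℝ≥0∞) * coneQuasiDist n y x) ↔
      (∃ M : ℝ, 0 ≤ M ∧ ∀ x : C, φ x ≤ M * n x)) := by
  have hn0 : n 0 = 0 := by simpa using hsmul 0 0
  have hφ0 : φ 0 = 0 := by simpa using hφsmul 0 0
  have lip_of_bdd : (∃ M : ℝ, 0 ≤ M ∧ ∀ x : C, φ x ≤ M * n x) → ∃ L : ℝ≥0, ∀ x y : C,
      ENNReal.ofReal (φ x - φ y) ≤ (L : ℝ≥0∞) * coneQuasiDist n y x := by
    rintro ⟨M, hM, hφM⟩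
    have hL : ((M + 1).toNNReal : ℝ) = M + 1 := Real.coe_toNNReal _ (by positivity)
    refine ⟨(M + 1).toNNReal, semiLipschitz_of_le_mul hφadd ?_ fun z => ?_⟩
    · exact (Real.toNNReal_pos.mpr (by positivity)).ne'
    · rw [hL]
      nlinarith [hφM z, hnn z]
  have bdd_of_usc : @UpperSemicontinuous C ℝ (forwardTop n) _ φ →
      ∃ M : ℝ, 0 ≤ M ∧ ∀ x : C, φ x ≤ M * n x := fun h => by
    obtain ⟨δ, hδ, hφδ⟩ := exists_pos_forall_lt_one_of_upperSemicontinuous hn0 hnn hadd hφ0 h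
    exact ⟨δ⁻¹, inv_nonneg.mpr hδ.le, le_inv_mul_of_forall_lt_one hnn hsmul hφsmul hδ hφδ⟩
  refine ⟨⟨fun h => lip_of_bdd (bdd_of_usc h), ?_⟩, ⟨?_, lip_of_bdd⟩⟩
  · rintro ⟨L, hL⟩
    exact upperSemicontinuous_of_semiLipschitz hn0 hnn hadd hL
  · rintro ⟨L, hL⟩
    exact ⟨L, L.coe_nonneg, le_mul_of_semiLipschitz hnn hφ0 hL⟩

/-- For a linear functional `φ` on a normed cone, the following are equivalent:
(i) `φ` is upper semicontinuous for the forward topology of `d_e`;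
(ii) `φ` is semi-Lipschitz on `(C, d_e)`;
(iii) `φ x ≤ M * ‖x|` for some `M ≥ 0` and all `x`. -/
theorem linear_functional_usc_iff_semiLipschitz_iff_bounded
    {C : Type*} [AddCommMonoid C] [Module ℝ≥0 C] (n : C → ℝ)
    (hnn : ∀ x, 0 ≤ n x)
    (hadd : ∀ x y, n (x + y) ≤ n x + n y)
    (hzero : ∀ x, n x = 0 ↔ x = 0)
    (hsmul : ∀ (r : ℝ≥0) (x : C), n (r • x) = (r : ℝ) * n x)
    (φ : C → ℝ)
    (hφadd : ∀ x y, φ (x + y) = φ x + φ y)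
    (hφsmul : ∀ (r : ℝ≥0) (x : C), φ (r • x) = (r : ℝ) * φ x) :
    ((@UpperSemicontinuous C ℝ (forwardTop n) _ φ) ↔
      (∃ L : ℝ≥0, ∀ x y : C,
        ENNReal.ofReal (φ x - φ y) ≤ (L : ℝ≥0∞) * coneQuasiDist n y x)) ∧
    ((∃ L : ℝ≥0, ∀ x y : C,
        ENNReal.ofReal (φ x - φ y) ≤ (L : ℝ≥0∞) * coneQuasiDist n y x) ↔
      (∃ M : ℝ, 0 ≤ M ∧ ∀ x : C, φ x ≤ M * n x)) :=
  linear_functional_usc_iff_semiLipschitz_iff_bounded_general n hnn hadd hsmul φ hφadd hφsmul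
end

section
/- Let (C,‖·|) be a normed cone and φ : C → ℝ a linear functional with φ(x) ≤ M‖x| for some M ≥ 0. Then the dual conic norm ‖φ|* = sup_{‖x|≤1} φ(x) equals the semi-Lipschitz constant ‖φ|_S of φ with respect to the extended quasi-metric d_e(x,y) = inf{‖z| : y = x+z}. -/
open scoped NNReal ENNReal

open Set

lemma Real.csInf_Ioi_zero_inter_Ici {a : ℝ} (ha : 0 ≤ a) : sInf (Ioi 0 ∩ Ici a) = a := by
  rcases ha.eq_or_lt with rfl | ha
  · rw [inter_eq_left.2 Ioi_subset_Ici_self, csInf_Ioi]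
  · rw [inter_eq_right.2 (Ici_subset_Ioi.2 ha), csInf_Ici]

/-- The dual conic norm `‖φ|*`. -/
noncomputable def conicDualNorm {C : Type*} (n φ : C → ℝ) : ℝ :=
  sSup {r : ℝ | ∃ x : C, n x ≤ 1 ∧ r = φ x}

lemma bddAbove_conicDualNorm_set {C : Type*} {n φ : C → ℝ} {M : ℝ} (hM : 0 ≤ M)
    (hbd : ∀ x, φ x ≤ M * n x) :
    BddAbove {r : ℝ | ∃ x : C, n x ≤ 1 ∧ r = φ x} := by
  refine ⟨M, ?_⟩
  rintro r ⟨x, hx, rfl⟩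
  calc φ x ≤ M * n x := hbd x
    _ ≤ M * 1 := mul_le_mul_of_nonneg_left hx hM
    _ = M := mul_one M

section

variable {C : Type*} [AddCommMonoid C] {n φ : C → ℝ}

lemma coneQuasiDist_le_add (n : C → ℝ) (x z : C) :
    coneQuasiDist n x (x + z) ≤ ENNReal.ofReal (n z) :=
  sInf_le ⟨z, rfl, rfl⟩

/-- On a cone, `d_e(y, x) < ∞` only when `x = y + z`, so the semi-Lipschitz condition reduces to
the one-sided bound `φ z ≤ L ‖z|`. -/
lemma semiLipschitz_iff_le_mul (hnn : ∀ x, 0 ≤ n x) (hφadd : ∀ x y, φ (x + y) = φ x + φ y)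
    {L : ℝ} (hL : 0 < L) :
    (∀ x y : C, ENNReal.ofReal (φ x - φ y) ≤ ENNReal.ofReal L * coneQuasiDist n y x) ↔
      ∀ z : C, φ z ≤ L * n z := by
  have hL₀ : ENNReal.ofReal L ≠ 0 := (ENNReal.ofReal_pos.2 hL).ne'
  have hφ_add_sub : ∀ y z, φ (y + z) - φ y = φ z := fun y z => by rw [hφadd]; ring
  constructor
  · intro h z
    have hz : ENNReal.ofReal (φ z) ≤ ENNReal.ofReal (L * n z) := by
      have := (h (0 + z) 0).trans (mul_le_mul_right (coneQuasiDist_le_add n 0 z) _)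
      rwa [hφ_add_sub, ← ENNReal.ofReal_mul hL.le] at this
    exact (ENNReal.ofReal_le_ofReal_iff (mul_nonneg hL.le (hnn z))).1 hz
  · intro h x y
    rw [mul_comm, ← ENNReal.div_le_iff_le_mul (.inl hL₀) (.inl ENNReal.ofReal_ne_top)]
    refine le_sInf ?_
    rintro e ⟨z, rfl, rfl⟩
    rw [ENNReal.div_le_iff_le_mul (.inl hL₀) (.inl ENNReal.ofReal_ne_top), hφ_add_sub, mul_comm,
      ← ENNReal.ofReal_mul hL.le]
    exact ENNReal.ofReal_le_ofReal (h z)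

variable [Module ℝ≥0 C]

/-- Rescaling `z` to the unit ball shows that `‖φ|*` itself is a bound. -/
lemma le_conicDualNorm_mul (hnn : ∀ x, 0 ≤ n x) (hzero : ∀ x, n x = 0 ↔ x = 0)
    (hsmul : ∀ (r : ℝ≥0) (x : C), n (r • x) = (r : ℝ) * n x)
    (hφsmul : ∀ (r : ℝ≥0) (x : C), φ (r • x) = (r : ℝ) * φ x)
    (hS : BddAbove {r : ℝ | ∃ x : C, n x ≤ 1 ∧ r = φ x}) (z : C) :
    φ z ≤ conicDualNorm n φ * n z := by
  rcases (hnn z).eq_or_lt with hz | hz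
  · have hφ0 : φ 0 = 0 := by simpa using hφsmul 0 0
    rw [(hzero z).1 hz.symm, hφ0, (hzero 0).2 rfl, mul_zero]
  · have hr : ((n z)⁻¹.toNNReal : ℝ) = (n z)⁻¹ := Real.coe_toNNReal _ (inv_nonneg.2 hz.le)
    have hunit : n ((n z)⁻¹.toNNReal • z) ≤ 1 := by
      rw [hsmul, hr, inv_mul_cancel₀ hz.ne']
    have hle := le_csSup hS ⟨_, hunit, rfl⟩
    rwa [hφsmul, hr, inv_mul_le_iff₀ hz, mul_comm] at hle

lemma conicDualNorm_le_iff (hnn : ∀ x, 0 ≤ n x) (hzero : ∀ x, n x = 0 ↔ x = 0)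
    (hsmul : ∀ (r : ℝ≥0) (x : C), n (r • x) = (r : ℝ) * n x)
    (hφsmul : ∀ (r : ℝ≥0) (x : C), φ (r • x) = (r : ℝ) * φ x)
    (hS : BddAbove {r : ℝ | ∃ x : C, n x ≤ 1 ∧ r = φ x}) {L : ℝ} (hL : 0 ≤ L) :
    conicDualNorm n φ ≤ L ↔ ∀ z : C, φ z ≤ L * n z := by
  refine ⟨fun h z => (le_conicDualNorm_mul hnn hzero hsmul hφsmul hS z).trans
    (mul_le_mul_of_nonneg_right h (hnn z)), fun h => csSup_le ⟨φ 0, 0, ?_, rfl⟩ ?_⟩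
  · rw [(hzero 0).2 rfl]; exact zero_le_one
  · rintro r ⟨x, hx, rfl⟩
    calc φ x ≤ L * n x := h x
      _ ≤ L * 1 := mul_le_mul_of_nonneg_left hx hL
      _ = L := mul_one L

lemma conicDualNorm_nonneg (hzero : ∀ x, n x = 0 ↔ x = 0)
    (hφsmul : ∀ (r : ℝ≥0) (x : C), φ (r • x) = (r : ℝ) * φ x)
    (hS : BddAbove {r : ℝ | ∃ x : C, n x ≤ 1 ∧ r = φ x}) :
    0 ≤ conicDualNorm n φ :=
  le_csSup hS ⟨0, ((hzero 0).2 rfl).trans_le zero_le_one, by simpa using (hφsmul 0 0).symm⟩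

end

theorem dual_conic_norm_eq_semiLipschitz_const_general {C : Type*} [AddCommMonoid C] [Module ℝ≥0 C]
    (n : C → ℝ)
    (hnn : ∀ x, 0 ≤ n x)
    (hzero : ∀ x, n x = 0 ↔ x = 0)
    (hsmul : ∀ (r : ℝ≥0) (x : C), n (r • x) = (r : ℝ) * n x)
    (φ : C → ℝ)
    (hφadd : ∀ x y, φ (x + y) = φ x + φ y)
    (hφsmul : ∀ (r : ℝ≥0) (x : C), φ (r • x) = (r : ℝ) * φ x)
    (M : ℝ) (hM : 0 ≤ M) (hbd : ∀ x, φ x ≤ M * n x) :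
    sSup {r : ℝ | ∃ x : C, n x ≤ 1 ∧ r = φ x} =
      sInf {L : ℝ | 0 < L ∧ ∀ x y : C,
        ENNReal.ofReal (φ x - φ y) ≤ ENNReal.ofReal L * coneQuasiDist n y x} := by
  change conicDualNorm n φ = _
  have hS := bddAbove_conicDualNorm_set hM hbd
  have hT : {L : ℝ | 0 < L ∧ ∀ x y : C,
      ENNReal.ofReal (φ x - φ y) ≤ ENNReal.ofReal L * coneQuasiDist n y x} =
      Ioi 0 ∩ Ici (conicDualNorm n φ) := by
    ext L
    simp only [mem_ofPred_eq, mem_inter_iff, mem_Ioi, mem_Ici]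
    refine and_congr_right fun hL => ?_
    rw [semiLipschitz_iff_le_mul hnn hφadd hL, conicDualNorm_le_iff hnn hzero hsmul hφsmul hS hL.le]
  rw [hT, Real.csInf_Ioi_zero_inter_Ici (conicDualNorm_nonneg hzero hφsmul hS)]

/-- For a bounded linear functional on a normed cone, the dual conic norm
equals the semi-Lipschitz constant with respect to the induced extended
quasi-metric `d_e`. -/
theorem dual_conic_norm_eq_semiLipschitz_const {C : Type*} [AddCommMonoid C] [Module ℝ≥0 C]
    (n : C → ℝ)
    (hnn : ∀ x, 0 ≤ n x)
    (hadd : ∀ x y, n (x + y) ≤ n x + n y)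
    (hzero : ∀ x, n x = 0 ↔ x = 0)
    (hsmul : ∀ (r : ℝ≥0) (x : C), n (r • x) = (r : ℝ) * n x)
    (φ : C → ℝ)
    (hφadd : ∀ x y, φ (x + y) = φ x + φ y)
    (hφsmul : ∀ (r : ℝ≥0) (x : C), φ (r • x) = (r : ℝ) * φ x)
    (M : ℝ) (hM : 0 ≤ M) (hbd : ∀ x, φ x ≤ M * n x) :
    sSup {r : ℝ | ∃ x : C, n x ≤ 1 ∧ r = φ x} =
      sInf {L : ℝ | 0 < L ∧ ∀ x y : C,
        ENNReal.ofReal (φ x - φ y) ≤ ENNReal.ofReal L * coneQuasiDist n y x} :=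
  dual_conic_norm_eq_semiLipschitz_const_general n hnn hzero hsmul φ hφadd hφsmul M hM hbd
end

section
/- Let (X,‖·|) be a finite-dimensional asymmetric normed space (whose induced topology is T₁). Then there exists M > 0 such that ‖-x| ≤ M‖x| for all x ∈ X; consequently, for every continuous linear functional φ on X, -φ is also continuous and ‖-φ|* ≤ M‖φ|*, so the dual cone X* is a linear space. -/
/-!
Symmetrizing `n` gives a genuine norm `‖x‖ = n x + n (-x)` on `X`. For this norm `n` is
1-Lipschitz, hence continuous, and in finite dimension the unit sphere is compact, so `n` is
bounded below on it by some `c > 0`. By homogeneity `c ‖x‖ ≤ n x`, and therefore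
`n (-x) ≤ ‖x‖ ≤ c⁻¹ n x`. The statements about functionals follow by evaluating at `-x` and at
`M⁻¹ • (-x)`.
-/

open Metric

theorem exists_pos_mul_norm_le_of_continuous {E : Type*} [NormedAddCommGroup E]
    [NormedSpace ℝ E] [FiniteDimensional ℝ E] {f : E → ℝ} (hf : Continuous f)
    (hpos : ∀ x, x ≠ 0 → 0 < f x) (hsmul : ∀ r : ℝ, 0 < r → ∀ x, f (r • x) = r * f x) :
    ∃ c, 0 < c ∧ ∀ x, c * ‖x‖ ≤ f x := by
  obtain ⟨c, hc, hc_le⟩ := (isCompact_sphere (0 : E) 1).exists_forall_le' hf.continuousOn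
    fun x hx => hpos x (ne_zero_of_mem_unit_sphere ⟨x, hx⟩)
  refine ⟨c, hc, fun x => ?_⟩
  rcases eq_or_ne x 0 with rfl | hx
  · have h0 : f 0 = 2 * f 0 := by simpa using hsmul 2 two_pos 0
    simp only [norm_zero, mul_zero]
    linarith
  · have hnorm : 0 < ‖x‖ := norm_pos_iff.mpr hx
    have hunit : ‖x‖⁻¹ • x ∈ sphere (0 : E) 1 := by
      simp [norm_smul, hnorm.ne']
    calc c * ‖x‖ ≤ f (‖x‖⁻¹ • x) * ‖x‖ := by gcongr; exact hc_le _ hunit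
      _ = f x := by rw [hsmul _ (inv_pos.mpr hnorm), mul_comm, ← mul_assoc,
          mul_inv_cancel₀ hnorm.ne', one_mul]

structure IsAsymmetricNorm {X : Type*} [AddCommGroup X] [Module ℝ X] (n : X → ℝ) : Prop where
  nonneg : ∀ x, 0 ≤ n x
  add_le : ∀ x y, n (x + y) ≤ n x + n y
  smul_of_pos : ∀ r : ℝ, 0 < r → ∀ x, n (r • x) = r * n x
  eq_zero_iff : ∀ x, n x = 0 ↔ x = 0

namespace IsAsymmetricNorm

variable {X : Type*} [AddCommGroup X] [Module ℝ X] {n : X → ℝ}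

theorem map_zero (hn : IsAsymmetricNorm n) : n 0 = 0 := (hn.eq_zero_iff 0).mpr rfl

def symmNorm (hn : IsAsymmetricNorm n) : AddGroupNorm X where
  toFun x := n x + n (-x)
  map_zero' := by simp [hn.map_zero]
  add_le' x y := by
    have := hn.add_le x y
    have := hn.add_le (-x) (-y)
    rw [neg_add]
    linarith
  neg' x := by rw [neg_neg, add_comm]
  eq_zero_of_map_eq_zero' x hx := by
    have := hn.nonneg x
    have := hn.nonneg (-x)
    exact (hn.eq_zero_iff x).mp (by linarith)

theorem symmNorm_apply (hn : IsAsymmetricNorm n) (x : X) : hn.symmNorm x = n x + n (-x) := rfl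

theorem symmNorm_smul (hn : IsAsymmetricNorm n) (r : ℝ) (x : X) :
    hn.symmNorm (r • x) = |r| * hn.symmNorm x := by
  rcases lt_trichotomy r 0 with hr | rfl | hr
  · rw [← neg_neg r, neg_smul, map_neg_eq_map, abs_neg, abs_of_pos (neg_pos.mpr hr),
      symmNorm_apply, symmNorm_apply, ← smul_neg, hn.smul_of_pos _ (neg_pos.mpr hr),
      hn.smul_of_pos _ (neg_pos.mpr hr), mul_add]
  · simp
  · rw [abs_of_pos hr, symmNorm_apply, symmNorm_apply, ← smul_neg, hn.smul_of_pos _ hr,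
      hn.smul_of_pos _ hr, mul_add]

theorem exists_neg_le_mul [FiniteDimensional ℝ X] (hn : IsAsymmetricNorm n) :
    ∃ M, 0 < M ∧ ∀ x, n (-x) ≤ M * n x := by
  let : NormedAddCommGroup X := hn.symmNorm.toNormedAddCommGroup
  let : NormedSpace ℝ X := ⟨fun r x => (hn.symmNorm_smul r x).le⟩
  have hlip : LipschitzWith 1 n := LipschitzWith.of_le_add fun x y => by
    have hsplit : n x ≤ n y + n (x - y) := by simpa using hn.add_le y (x - y)
    rw [dist_eq_norm]
    change n x ≤ n y + (n (x - y) + n (-(x - y)))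
    linarith [hn.nonneg (-(x - y))]
  obtain ⟨c, hc, hc_le⟩ := exists_pos_mul_norm_le_of_continuous hlip.continuous
    (fun x hx => (hn.nonneg x).lt_of_ne' (mt (hn.eq_zero_iff x).mp hx)) hn.smul_of_pos
  refine ⟨c⁻¹, inv_pos.mpr hc, fun x => ?_⟩
  have hnorm : n x + n (-x) = ‖x‖ := rfl
  calc n (-x) ≤ ‖x‖ := by linarith [hn.nonneg x]
    _ ≤ c⁻¹ * n x := by rw [le_inv_mul_iff₀ hc]; exact hc_le x

end IsAsymmetricNorm

section DualNorm

variable {X : Type*} [AddCommGroup X] [Module ℝ X] {n : X → ℝ}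

noncomputable def asymmDualNorm (n : X → ℝ) (φ : X →ₗ[ℝ] ℝ) : ℝ :=
  sSup {r : ℝ | ∃ x : X, n x ≤ 1 ∧ r = φ x}

theorem neg_le_mul_of_le_mul {M K : ℝ} (hK : 0 ≤ K) (hrev : ∀ x, n (-x) ≤ M * n x)
    {φ : X →ₗ[ℝ] ℝ} (hφ : ∀ x, φ x ≤ K * n x) (x : X) : -φ x ≤ K * M * n x := by
  calc -φ x = φ (-x) := (map_neg φ x).symm
    _ ≤ K * n (-x) := hφ (-x)
    _ ≤ K * (M * n x) := by gcongr; exact hrev x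
    _ = K * M * n x := (mul_assoc _ _ _).symm

theorem bddAbove_of_le_mul {K : ℝ} (hK : 0 ≤ K) {φ : X →ₗ[ℝ] ℝ}
    (hφ : ∀ x, φ x ≤ K * n x) : BddAbove {r : ℝ | ∃ x : X, n x ≤ 1 ∧ r = φ x} := by
  refine ⟨K, ?_⟩
  rintro _ ⟨x, hx, rfl⟩
  calc φ x ≤ K * n x := hφ x
    _ ≤ K * 1 := by gcongr
    _ = K := mul_one K

theorem IsAsymmetricNorm.asymmDualNorm_neg_le (hn : IsAsymmetricNorm n) {M : ℝ} (hM : 0 < M)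
    (hrev : ∀ x, n (-x) ≤ M * n x) {φ : X →ₗ[ℝ] ℝ}
    (hbdd : BddAbove {r : ℝ | ∃ x : X, n x ≤ 1 ∧ r = φ x}) :
    asymmDualNorm n (-φ) ≤ M * asymmDualNorm n φ := by
  have hle_dual : ∀ x, n x ≤ 1 → φ x ≤ asymmDualNorm n φ :=
    fun x hx => le_csSup hbdd ⟨x, hx, rfl⟩
  have hdual_nonneg : 0 ≤ asymmDualNorm n φ := by
    simpa using hle_dual 0 (by simp [hn.map_zero])
  refine Real.sSup_le ?_ (by positivity)
  rintro _ ⟨x, hx, rfl⟩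
  have hy : n (M⁻¹ • -x) ≤ 1 := by
    rw [hn.smul_of_pos _ (inv_pos.mpr hM), inv_mul_le_iff₀ hM]
    linarith [hrev x, mul_le_mul_of_nonneg_left hx hM.le]
  have hφy := hle_dual _ hy
  rwa [map_smul, map_neg, smul_eq_mul, inv_mul_le_iff₀ hM] at hφy

end DualNorm

/-- In a finite-dimensional asymmetric normed space there exists `M > 0` with
`‖-x| ≤ M ‖x|` for all `x`; consequently, for every linear functional bounded
above for the asymmetric norm, its opposite is also bounded above and the dual
conic norms satisfy `‖-φ|* ≤ M ‖φ|*` (so the dual cone is a linear space). -/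
theorem finiteDimensional_asymmetric_norm_reverse_bound
    {X : Type*} [AddCommGroup X] [Module ℝ X] [FiniteDimensional ℝ X]
    (n : X → ℝ)
    (hnn : ∀ x, 0 ≤ n x)
    (hadd : ∀ x y, n (x + y) ≤ n x + n y)
    (hsmul : ∀ (r : ℝ), 0 < r → ∀ x, n (r • x) = r * n x)
    (hzero : ∀ x, n x = 0 ↔ x = 0) :
    ∃ M : ℝ, 0 < M ∧ (∀ x : X, n (-x) ≤ M * n x) ∧
      ∀ φ : X →ₗ[ℝ] ℝ, (∃ K : ℝ, 0 ≤ K ∧ ∀ x, φ x ≤ K * n x) →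
        (∃ K : ℝ, 0 ≤ K ∧ ∀ x, -φ x ≤ K * n x) ∧
        sSup {r : ℝ | ∃ x : X, n x ≤ 1 ∧ r = -φ x} ≤
          M * sSup {r : ℝ | ∃ x : X, n x ≤ 1 ∧ r = φ x} := by
  have hn : IsAsymmetricNorm n := ⟨hnn, hadd, hsmul, hzero⟩
  obtain ⟨M, hM, hrev⟩ := hn.exists_neg_le_mul
  refine ⟨M, hM, hrev, fun φ ⟨K, hK, hφ⟩ => ⟨?_, ?_⟩⟩
  · exact ⟨K * M, by positivity, neg_le_mul_of_le_mul hK hrev hφ⟩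
  · exact hn.asymmDualNorm_neg_le hM hrev (bddAbove_of_le_mul hK hφ)
end

section
/- Let ℒ¹(ℝ) be endowed with the asymmetric norm ‖f|_{1,+} = ∫ f⁺ dλ (where f⁺ = max{f,0}). Then the dual cone of (ℒ¹(ℝ), ‖·|_{1,+}) is isometrically isomorphic to the normed cone (ℒ^∞₊(ℝ), ‖·‖_∞) of nonnegative essentially bounded functions: every linear functional φ with φ(f) ≤ M‖f|_{1,+} is of the form φ(f) = ∫ g f dλ for a unique g ∈ ℒ^∞ with g ≥ 0 a.e., and the dual conic norm of φ equals ‖g‖_∞. -/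
/-!
The functional `φ` is positive and satisfies `φ 𝟙_(a,b] ≤ M (b - a)`, so
`F t = φ 𝟙_(0,t]` (read with orientation for `t < 0`) is monotone and `M`-Lipschitz. Its
Stieltjes measure `ν` is dominated by `M λ`, because `M t - F t` is monotone as well; hence
`ν = g λ` with `0 ≤ g ≤ M`. The continuous functionals `φ` and `f ↦ ∫ g f` agree on indicators
of intervals, which form a generating π-system, so by Dynkin's theorem they agree on all
indicators and hence on `L¹`. Testing against normalized indicators of sets where `g > r`
shows that the dual norm of `φ` is `‖g‖_∞`.
-/

open MeasureTheory Set Filter Topology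
open scoped ENNReal NNReal symmDiff

/-- The asymmetric norm `‖f|_{1,+} = ∫ f⁺` on `L¹(ℝ)`. -/
noncomputable def posL1Norm (f : Lp ℝ 1 (volume : Measure ℝ)) : ℝ :=
  ∫ x, max (f x) 0

namespace MeasureTheory

section Indicators

variable {α E F : Type*} [MeasurableSpace α] {μ : Measure α} {p : ℝ≥0∞}
  [NormedAddCommGroup E] [NormedAddCommGroup F]

lemma indicatorConstLp_congr_set {s t : Set α} (hst : s = t) {hs : MeasurableSet s}
    {hμs : μ s ≠ ∞} {ht : MeasurableSet t} {hμt : μ t ≠ ∞} {c : E} :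
    indicatorConstLp p hs hμs c = indicatorConstLp p ht hμt c := by
  subst hst; rfl

lemma indicatorConstLp_eq_smul_one {s : Set α} (hs : MeasurableSet s) (hμs : μ s ≠ ∞) (c : ℝ) :
    indicatorConstLp p hs hμs c = c • indicatorConstLp p hs hμs (1 : ℝ) := by
  refine Lp.ext ?_
  filter_upwards [indicatorConstLp_coeFn (p := p) (hs := hs) (hμs := hμs) (c := c),
    Lp.coeFn_smul c (indicatorConstLp p hs hμs (1 : ℝ)),
    indicatorConstLp_coeFn (p := p) (hs := hs) (hμs := hμs) (c := (1 : ℝ))] with x h₁ h₂ h₃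
  rw [h₁, h₂, Pi.smul_apply, h₃, ← indicator_const_smul_apply, smul_eq_mul, mul_one]

variable [Fact (1 ≤ p)]

lemma tendsto_indicatorConstLp_iUnion (hp : p ≠ ∞) {A : ℕ → Set α}
    (hA : ∀ k, MeasurableSet (A k)) (hmono : Monotone A) (hμ : μ (⋃ k, A k) ≠ ∞) (c : E) :
    Tendsto (fun k ↦ indicatorConstLp p (hA k)
        (measure_ne_top_of_subset (subset_iUnion A k) hμ) c) atTop
      (𝓝 (indicatorConstLp p (MeasurableSet.iUnion hA) hμ c)) := by
  refine tendsto_indicatorConstLp_set hp ?_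
  have hsymm : ∀ k, A k ∆ (⋃ k, A k) = (⋃ k, A k) \ A k := fun k ↦
    symmDiff_of_le (subset_iUnion A k)
  simp only [hsymm]
  have := tendsto_measure_iInter_atTop (μ := μ) (s := fun k ↦ (⋃ k, A k) \ A k)
    (fun k ↦ ((MeasurableSet.iUnion hA).diff (hA k)).nullMeasurableSet)
    (fun i j hij ↦ sdiff_subset_sdiff_right (hmono hij))
    ⟨0, measure_ne_top_of_subset sdiff_subset hμ⟩
  rwa [← sdiff_iUnion, sdiff_self, measure_empty] at this

variable [NormedSpace ℝ F]

lemma map_indicatorConstLp_iUnion_eq_zero (hp : p ≠ ∞) (χ : Lp ℝ p μ →L[ℝ] F)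
    {f : ℕ → Set α} (hf : ∀ i, MeasurableSet (f i)) (hdisj : Pairwise (Function.onFun Disjoint f))
    (hμ : μ (⋃ i, f i) ≠ ∞)
    (hχ : ∀ i, χ (indicatorConstLp p (hf i)
      (measure_ne_top_of_subset (subset_iUnion f i) hμ) 1) = 0) :
    χ (indicatorConstLp p (MeasurableSet.iUnion hf) hμ 1) = 0 := by
  set A := accumulate f
  have hAm : ∀ k, MeasurableSet (A k) := fun k ↦
    MeasurableSet.biUnion (to_countable _) fun i _ ↦ hf i
  have hAU : ⋃ k, A k = ⋃ i, f i := iUnion_accumulate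
  have hfin : ∀ {t}, t ⊆ ⋃ i, f i → μ t ≠ ∞ := fun h ↦ measure_ne_top_of_subset h hμ
  have hA_zero : ∀ k, χ (indicatorConstLp p (hAm k)
      (hfin (hAU ▸ subset_iUnion A k)) 1) = 0 := by
    intro k
    induction k with
    | zero =>
      rw [indicatorConstLp_congr_set (accumulate_zero_nat f) (ht := hf 0)
        (hμt := hfin (subset_iUnion f 0))]
      exact hχ 0
    | succ k ih =>
      rw [indicatorConstLp_congr_set (accumulate_succ f k) (ht := (hAm k).union (hf (k + 1)))
          (hμt := hfin (union_subset (hAU ▸ subset_iUnion A k) (subset_iUnion f (k + 1)))),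
        indicatorConstLp_disjoint_union (hAm k) (hf (k + 1)) (hfin (hAU ▸ subset_iUnion A k))
          (hfin (subset_iUnion f (k + 1))) (disjoint_accumulate hdisj k.lt_succ_self),
        map_add, ih, hχ (k + 1), add_zero]
  have hlim := (χ.continuous.tendsto _).comp (tendsto_indicatorConstLp_iUnion hp hAm
    monotone_accumulate (hAU ▸ hμ) (1 : ℝ))
  rw [indicatorConstLp_congr_set hAU (ht := MeasurableSet.iUnion hf) (hμt := hμ)] at hlim
  exact tendsto_nhds_unique hlim (tendsto_const_nhds.congr fun k ↦ (hA_zero k).symm)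

lemma map_indicatorConstLp_inter_eq_zero (hp : p ≠ ∞) {C : Set (Set α)}
    (hgen : ‹MeasurableSpace α› = MeasurableSpace.generateFrom C) (hC : IsPiSystem C)
    {J : Set α} (hJC : J ∈ C) (hμJ : μ J ≠ ∞) (χ : Lp ℝ p μ →L[ℝ] F)
    (hχ : ∀ s ∈ C, ∀ (hs : MeasurableSet s) (hμs : μ s ≠ ∞),
      χ (indicatorConstLp p hs hμs 1) = 0)
    {s : Set α} (hs : MeasurableSet s) (hsJ : MeasurableSet (s ∩ J)) :
    χ (indicatorConstLp p hsJ (measure_ne_top_of_subset inter_subset_right hμJ) 1) = 0 := by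
  have hJ : MeasurableSet J := hgen ▸ MeasurableSpace.measurableSet_generateFrom hJC
  have hfin : ∀ {t}, t ⊆ J → μ t ≠ ∞ := fun h ↦ measure_ne_top_of_subset h hμJ
  induction s, hs using MeasurableSpace.induction_on_inter hgen hC with
  | empty =>
    rw [indicatorConstLp_congr_set (empty_inter J) (ht := .empty) (hμt := by simp),
      indicatorConstLp_empty, map_zero]
  | basic t ht =>
    rcases (t ∩ J).eq_empty_or_nonempty with h | h
    · rw [indicatorConstLp_congr_set h (ht := .empty) (hμt := by simp),
        indicatorConstLp_empty, map_zero]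
    · exact hχ _ (hC t ht J hJC h) _ _
  | compl t htm iht =>
    have hJ_eq : (t ∩ J) ∪ (tᶜ ∩ J) = J := by
      rw [← union_inter_distrib_right, union_compl_self, univ_inter]
    have h := indicatorConstLp_disjoint_union (p := p) (htm.inter hJ) hsJ
      (hfin inter_subset_right) (hfin inter_subset_right)
      (disjoint_compl_right.mono inter_subset_left inter_subset_left) (1 : ℝ)
    rw [indicatorConstLp_congr_set hJ_eq (ht := hJ) (hμt := hμJ)] at h
    have := congrArg χ h
    rwa [map_add, hχ J hJC, iht (htm.inter hJ), zero_add, eq_comm] at this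
  | iUnion f hdisj hfm ihf =>
    have hU : ⋃ i, f i ∩ J = (⋃ i, f i) ∩ J := (iUnion_inter _ _).symm
    rw [← indicatorConstLp_congr_set hU (hs := .iUnion fun i ↦ (hfm i).inter hJ)
      (hμs := hU ▸ hfin inter_subset_right)]
    exact map_indicatorConstLp_iUnion_eq_zero hp χ (fun i ↦ (hfm i).inter hJ)
      (fun i j hij ↦ (hdisj hij).mono inter_subset_left inter_subset_left) _
      fun i ↦ ihf i ((hfm i).inter hJ)

theorem Lp.continuousLinearMap_eq_zero_of_isPiSystem (hp : p ≠ ∞) {C : Set (Set α)}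
    (hgen : ‹MeasurableSpace α› = MeasurableSpace.generateFrom C) (hC : IsPiSystem C)
    {J : ℕ → Set α} (hJC : ∀ n, J n ∈ C) (hμJ : ∀ n, μ (J n) ≠ ∞) (hJmono : Monotone J)
    (hJU : ⋃ n, J n = univ) (χ : Lp ℝ p μ →L[ℝ] F)
    (hχ : ∀ s ∈ C, ∀ (hs : MeasurableSet s) (hμs : μ s ≠ ∞),
      χ (indicatorConstLp p hs hμs 1) = 0) :
    χ = 0 := by
  have hJ : ∀ n, MeasurableSet (J n) := fun n ↦
    hgen ▸ MeasurableSpace.measurableSet_generateFrom (hJC n)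
  have hind : ∀ s (hs : MeasurableSet s) (hμs : μ s ≠ ∞),
      χ (indicatorConstLp p hs hμs 1) = 0 := by
    intro s hs hμs
    have hU : ⋃ n, s ∩ J n = s := by rw [← inter_iUnion, hJU, inter_univ]
    have hlim := (χ.continuous.tendsto _).comp (tendsto_indicatorConstLp_iUnion hp
      (fun n ↦ hs.inter (hJ n)) (fun m n hmn ↦ inter_subset_inter_right s (hJmono hmn))
      (by rwa [hU]) (1 : ℝ))
    rw [indicatorConstLp_congr_set hU (ht := hs) (hμt := hμs)] at hlim
    exact tendsto_nhds_unique hlim (tendsto_const_nhds.congr fun n ↦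
      (map_indicatorConstLp_inter_eq_zero hp hgen hC (hJC n) (hμJ n) χ hχ hs _).symm)
  ext f
  refine Lp.induction hp (motive := fun f ↦ χ f = 0) (fun c s hs hμs ↦ ?_)
    (fun f g hf hg _ hf0 hg0 ↦ by rw [map_add, hf0, hg0, add_zero])
    (isClosed_eq χ.continuous continuous_const) f
  rw [Lp.simpleFunc.coe_indicatorConst, indicatorConstLp_eq_smul_one, map_smul, hind, smul_zero]

end Indicators

section LInfty

variable {α : Type*} [MeasurableSpace α] {μ : Measure α}

lemma Lp.ae_norm_le_norm_top {E : Type*} [NormedAddCommGroup E] (g : Lp E ∞ μ) :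
    ∀ᵐ x ∂μ, ‖g x‖ ≤ ‖g‖ := by
  have hg : eLpNormEssSup g μ ≠ ∞ := by simpa using Lp.eLpNorm_ne_top g
  filter_upwards [ae_le_eLpNormEssSup (f := ⇑g) (μ := μ)] with x hx
  simpa [Lp.norm_def] using ENNReal.toReal_mono hg hx

lemma Lp.norm_top_le_of_ae_bound {E : Type*} [NormedAddCommGroup E] {g : Lp E ∞ μ} {C : ℝ}
    (hC : 0 ≤ C) (h : ∀ᵐ x ∂μ, ‖g x‖ ≤ C) : ‖g‖ ≤ C := by
  rw [Lp.norm_def, eLpNorm_exponent_top]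
  exact ENNReal.toReal_le_of_le_ofReal hC (eLpNormEssSup_le_of_ae_bound h)

lemma integral_mul_indicatorConstLp (g : α → ℝ) {s : Set α} (hs : MeasurableSet s)
    (hμs : μ s ≠ ∞) (c : ℝ) :
    ∫ x, g x * indicatorConstLp 1 hs hμs c x ∂μ = (∫ x in s, g x ∂μ) * c := by
  rw [← integral_mul_const, ← integral_indicator hs]
  refine integral_congr_ae ?_
  filter_upwards [indicatorConstLp_coeFn (p := 1) (hs := hs) (hμs := hμs) (c := c)] with x hx
  simp only [hx, ← indicator_mul_right]

lemma Lp.integrableOn_of_top (g : Lp ℝ ∞ μ) {s : Set α} (hμs : μ s < ∞) : IntegrableOn g s μ :=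
  haveI : IsFiniteMeasure (μ.restrict s) := ⟨by simpa using hμs⟩
  ((Lp.memLp g).restrict s).integrable le_top

lemma Lp.eq_of_forall_integral_mul_eq [SigmaFinite μ] {g g' : Lp ℝ ∞ μ}
    (h : ∀ f : Lp ℝ 1 μ, ∫ x, g x * f x ∂μ = ∫ x, g' x * f x ∂μ) : g = g' := by
  refine Lp.ext (ae_eq_of_forall_setIntegral_eq_of_sigmaFinite
    (fun s _ hμs ↦ Lp.integrableOn_of_top g hμs) (fun s _ hμs ↦ Lp.integrableOn_of_top g' hμs)
    fun s hs hμs ↦ ?_)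
  simpa only [integral_mul_indicatorConstLp, mul_one] using h (indicatorConstLp 1 hs hμs.ne 1)

lemma integral_mul_le_norm_mul_integral_max {g : Lp ℝ ∞ μ} (hg : ∀ᵐ x ∂μ, 0 ≤ g x)
    (f : Lp ℝ 1 μ) : ∫ x, g x * f x ∂μ ≤ ‖g‖ * ∫ x, max (f x) 0 ∂μ := by
  have hpos : Integrable (fun x ↦ max (f x) 0) μ := (L1.integrable_coeFn f).pos_part
  rw [← integral_const_mul]
  refine integral_mono_ae ((L1.integrable_coeFn f).bdd_mul (Lp.aestronglyMeasurable g)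
    (Lp.ae_norm_le_norm_top g)) (hpos.const_mul _) ?_
  filter_upwards [hg, Lp.ae_norm_le_norm_top g] with x hgx hgn
  rw [Real.norm_of_nonneg hgx] at hgn
  calc g x * f x ≤ g x * max (f x) 0 := mul_le_mul_of_nonneg_left (le_max_left _ _) hgx
    _ ≤ ‖g‖ * max (f x) 0 := mul_le_mul_of_nonneg_right hgn (le_max_right _ _)

lemma exists_integral_max_eq_one_lt_integral_mul [SigmaFinite μ] {g : Lp ℝ ∞ μ}
    (hg : ∀ᵐ x ∂μ, 0 ≤ g x) {r : ℝ} (hr₀ : 0 ≤ r) (hr : r < ‖g‖) :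
    ∃ f : Lp ℝ 1 μ, ∫ x, max (f x) 0 ∂μ = 1 ∧ r < ∫ x, g x * f x ∂μ := by
  obtain ⟨r', hrr', hr'g⟩ := exists_between hr
  have hS : MeasurableSet {x | r' < g x} :=
    measurableSet_lt measurable_const (Lp.stronglyMeasurable g).measurable
  have hμS : 0 < μ {x | r' < g x} := by
    refine pos_iff_ne_zero.2 fun h0 ↦ ?_
    have hle : ‖g‖ ≤ r' := Lp.norm_top_le_of_ae_bound (by linarith) <| by
      filter_upwards [hg, measure_eq_zero_iff_ae_notMem.1 h0] with x hx₀ hx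
      simpa [Real.norm_of_nonneg hx₀] using hx
    linarith
  obtain ⟨B, hB, hBS, hμB₀, hμB⟩ := Measure.exists_subset_measure_lt_top hS hμS
  have hc : 0 < μ.real B := ENNReal.toReal_pos hμB₀.ne' hμB.ne
  refine ⟨indicatorConstLp 1 hB hμB.ne (μ.real B)⁻¹, ?_, ?_⟩
  · rw [← mul_inv_cancel₀ hc.ne', ← smul_eq_mul, ← integral_indicatorConstLp (p := 1) hB hμB.ne]
    refine integral_congr_ae ?_
    filter_upwards [indicatorConstLp_coeFn (p := 1) (hs := hB) (hμs := hμB.ne)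
      (c := (μ.real B)⁻¹)] with x hx
    rw [hx, max_eq_left (indicator_nonneg (fun _ _ ↦ by positivity) x)]
  · have hgB : r' * μ.real B ≤ ∫ x in B, g x ∂μ :=
      setIntegral_ge_of_const_le_real hB hμB.ne (fun x hx ↦ (hBS hx).le)
        (Lp.integrableOn_of_top g hμB)
    rw [integral_mul_indicatorConstLp]
    calc r < r' := hrr'
      _ = r' * μ.real B * (μ.real B)⁻¹ := by field_simp
      _ ≤ (∫ x in B, g x ∂μ) * (μ.real B)⁻¹ := by gcongr

lemma sSup_integral_mul_eq_norm [SigmaFinite μ] {g : Lp ℝ ∞ μ} (hg : ∀ᵐ x ∂μ, 0 ≤ g x) :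
    sSup {r : ℝ | ∃ f : Lp ℝ 1 μ, ∫ x, max (f x) 0 ∂μ ≤ 1 ∧ r = ∫ x, g x * f x ∂μ} = ‖g‖ := by
  have h0 := Lp.coeFn_zero ℝ 1 μ
  have hzero : ∫ x, max ((0 : Lp ℝ 1 μ) x) 0 ∂μ ≤ 1 ∧
      (0 : ℝ) = ∫ x, g x * (0 : Lp ℝ 1 μ) x ∂μ :=
    ⟨(integral_eq_zero_of_ae (h0.mono fun x hx ↦ by rw [hx, Pi.zero_apply, max_self])).trans_le
      zero_le_one,
      (integral_eq_zero_of_ae (h0.mono fun x hx ↦ by rw [hx, Pi.zero_apply, mul_zero])).symm⟩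
  refine csSup_eq_of_forall_le_of_forall_lt_exists_gt ⟨0, 0, hzero⟩ ?_ fun w hw ↦ ?_
  · rintro _ ⟨f, hf, rfl⟩
    calc ∫ x, g x * f x ∂μ ≤ ‖g‖ * ∫ x, max (f x) 0 ∂μ :=
          integral_mul_le_norm_mul_integral_max hg f
      _ ≤ ‖g‖ := mul_le_of_le_one_right (norm_nonneg g) hf
  rcases lt_or_ge w 0 with hw₀ | hw₀
  · exact ⟨0, ⟨0, hzero⟩, hw₀⟩
  obtain ⟨f, hf, hwf⟩ := exists_integral_max_eq_one_lt_integral_mul hg hw₀ hw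
  exact ⟨_, ⟨f, hf.le, rfl⟩, hwf⟩

lemma Measure.rnDeriv_le_of_le_smul [SigmaFinite μ] {ν : Measure α} {c : ℝ≥0}
    (h : ν ≤ c • μ) : ν.rnDeriv μ ≤ᵐ[μ] fun _ ↦ c := by
  refine ae_le_of_forall_setLIntegral_le_of_sigmaFinite (ν.measurable_rnDeriv μ)
    fun s _ _ ↦ ?_
  rw [setLIntegral_const]
  exact ((Measure.setLIntegral_rnDeriv_le s).trans (h s)).trans_eq (by simp)

lemma Measure.memLp_top_toReal_rnDeriv_of_le_smul [SigmaFinite μ] {ν : Measure α} {c : ℝ≥0}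
    (h : ν ≤ c • μ) : MemLp (fun x ↦ (ν.rnDeriv μ x).toReal) ∞ μ := by
  refine memLp_top_of_bound (ν.measurable_rnDeriv μ).ennreal_toReal.aestronglyMeasurable c ?_
  filter_upwards [Measure.rnDeriv_le_of_le_smul h] with x hx
  rw [Real.norm_of_nonneg ENNReal.toReal_nonneg]
  exact ENNReal.toReal_le_of_le_ofReal c.2 (by simpa using hx)

end LInfty

end MeasureTheory

noncomputable def iocIndicator (a b : ℝ) : Lp ℝ 1 (volume : Measure ℝ) :=
  indicatorConstLp 1 (measurableSet_Ioc (a := a) (b := b)) measure_Ioc_lt_top.ne 1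

lemma iocIndicator_of_le {a b : ℝ} (h : b ≤ a) : iocIndicator a b = 0 := by
  rw [iocIndicator, ← indicatorConstLp_empty (p := 1) (μ := volume) (c := (1 : ℝ))]
  congr 1; simp [h]

lemma iocIndicator_add_iocIndicator {a b c : ℝ} (hab : a ≤ b) (hbc : b ≤ c) :
    iocIndicator a b + iocIndicator b c = iocIndicator a c := by
  rw [iocIndicator, iocIndicator, ← indicatorConstLp_disjoint_union _ _ _ _
    (Ioc_disjoint_Ioc_of_le le_rfl)]
  congr 1; simp [Ioc_union_Ioc_eq_Ioc hab hbc]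

section IntervalMeasure

variable (Λ : Lp ℝ 1 (volume : Measure ℝ) →ₗ[ℝ] ℝ)

noncomputable def distribFun (t : ℝ) : ℝ := Λ (iocIndicator 0 t) - Λ (iocIndicator t 0)

lemma distribFun_sub_distribFun {s t : ℝ} (hst : s ≤ t) :
    distribFun Λ t - distribFun Λ s = Λ (iocIndicator s t) := by
  simp only [distribFun]
  rcases le_total 0 s with h0s | hs0
  · rw [iocIndicator_of_le (h0s.trans hst), iocIndicator_of_le h0s,
      ← iocIndicator_add_iocIndicator h0s hst, map_add, map_zero]
    ring
  rcases le_total 0 t with h0t | ht0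
  · rw [iocIndicator_of_le h0t, iocIndicator_of_le hs0, ← iocIndicator_add_iocIndicator hs0 h0t,
      map_add, map_zero]
    ring
  · rw [iocIndicator_of_le ht0, iocIndicator_of_le hs0, ← iocIndicator_add_iocIndicator hst ht0,
      map_add, map_zero]
    ring

variable {Λ} {M : ℝ}

lemma monotone_distribFun (hpos : ∀ a b, 0 ≤ Λ (iocIndicator a b)) : Monotone (distribFun Λ) :=
  fun s t hst ↦ sub_nonneg.1 (distribFun_sub_distribFun Λ hst ▸ hpos s t)

lemma monotone_mul_sub_distribFun (hle : ∀ a b, a ≤ b → Λ (iocIndicator a b) ≤ M * (b - a)) :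
    Monotone fun t ↦ M * t - distribFun Λ t := by
  intro s t hst
  have := distribFun_sub_distribFun Λ hst ▸ hle s t hst
  linarith

lemma lipschitzWith_distribFun (hpos : ∀ a b, 0 ≤ Λ (iocIndicator a b))
    (hle : ∀ a b, a ≤ b → Λ (iocIndicator a b) ≤ M * (b - a)) :
    LipschitzWith M.toNNReal (distribFun Λ) := by
  refine LipschitzWith.of_dist_le' fun s t ↦ ?_
  wlog hst : s ≤ t generalizing s t
  · rw [dist_comm, dist_comm s]; exact this t s (le_of_not_ge hst)
  rw [Real.dist_eq, Real.dist_eq, abs_of_nonpos (sub_nonpos.2 (monotone_distribFun hpos hst)),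
    abs_of_nonpos (sub_nonpos.2 hst)]
  have := distribFun_sub_distribFun Λ hst ▸ hle s t hst
  linarith

variable (hpos : ∀ a b, 0 ≤ Λ (iocIndicator a b))
  (hle : ∀ a b, a ≤ b → Λ (iocIndicator a b) ≤ M * (b - a))

noncomputable def distribStieltjes : StieltjesFunction ℝ where
  toFun := distribFun Λ
  mono' := monotone_distribFun hpos
  right_continuous' _ := (lipschitzWith_distribFun hpos hle).continuous.continuousWithinAt

lemma distribStieltjes_measure_Ioc (a b : ℝ) :
    (distribStieltjes hpos hle).measure (Ioc a b) = ENNReal.ofReal (Λ (iocIndicator a b)) := by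
  rcases le_total a b with hab | hba
  · rw [StieltjesFunction.measure_Ioc]
    exact congrArg ENNReal.ofReal (distribFun_sub_distribFun Λ hab)
  · rw [Ioc_eq_empty (not_lt.2 hba), measure_empty, iocIndicator_of_le hba, map_zero,
      ENNReal.ofReal_zero]

lemma distribStieltjes_measure_le (hM : 0 ≤ M) :
    (distribStieltjes hpos hle).measure ≤ M.toNNReal • volume := by
  let G : StieltjesFunction ℝ :=
    { toFun := fun t ↦ M * t - distribFun Λ t
      mono' := monotone_mul_sub_distribFun hle
      right_continuous' := fun _ ↦ ((continuous_const.mul continuous_id).sub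
        (lipschitzWith_distribFun hpos hle).continuous).continuousWithinAt }
  have hsum : distribStieltjes hpos hle + G = M.toNNReal • StieltjesFunction.id := by
    ext t
    change distribFun Λ t + (M * t - distribFun Λ t) = M.toNNReal * t
    rw [Real.coe_toNNReal M hM]
    ring
  calc (distribStieltjes hpos hle).measure ≤ (distribStieltjes hpos hle).measure + G.measure :=
        Measure.le_add_right le_rfl
    _ = M.toNNReal • volume := by
      rw [← StieltjesFunction.measure_add, hsum, StieltjesFunction.measure_smul,
        Real.volume_eq_stieltjes_id]

end IntervalMeasure

section Representation

theorem ContinuousLinearMap.ext_iocIndicator {F : Type*} [NormedAddCommGroup F]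
    [NormedSpace ℝ F] {χ₁ χ₂ : Lp ℝ 1 (volume : Measure ℝ) →L[ℝ] F}
    (h : ∀ a b, χ₁ (iocIndicator a b) = χ₂ (iocIndicator a b)) : χ₁ = χ₂ := by
  have hJU : ⋃ n : ℕ, Ioc (-(n + 1 : ℝ)) (n + 1) = univ := by
    refine eq_univ_of_forall fun x ↦ mem_iUnion.2 ?_
    obtain ⟨n, hn⟩ := exists_nat_gt |x|
    exact ⟨n, by linarith [neg_abs_le x], by linarith [le_abs_self x]⟩
  rw [← sub_eq_zero]
  refine Lp.continuousLinearMap_eq_zero_of_isPiSystem ENNReal.one_ne_top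
    (BorelSpace.measurable_eq.trans (borel_eq_generateFrom_Ioc ℝ)) (isPiSystem_Ioc id id)
    (fun n ↦ ⟨-(n + 1 : ℝ), n + 1, by linarith, rfl⟩) (fun n ↦ measure_Ioc_lt_top.ne)
    (fun m n hmn ↦ Ioc_subset_Ioc (by gcongr) (by gcongr)) hJU _ ?_
  rintro _ ⟨a, b, -, rfl⟩ hs hμs
  exact sub_eq_zero.2 (h a b)

lemma posL1Norm_le_norm (f : Lp ℝ 1 (volume : Measure ℝ)) : posL1Norm f ≤ ‖f‖ := by
  rw [L1.norm_eq_integral_norm]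
  exact integral_mono (L1.integrable_coeFn f).pos_part (L1.integrable_coeFn f).norm
    fun x ↦ max_le (le_abs_self _) (abs_nonneg _)

lemma posL1Norm_eq_norm_of_nonneg {f : Lp ℝ 1 (volume : Measure ℝ)} (hf : ∀ᵐ x, 0 ≤ f x) :
    posL1Norm f = ‖f‖ := by
  rw [posL1Norm, L1.norm_eq_integral_norm]
  refine integral_congr_ae ?_
  filter_upwards [hf] with x hx
  rw [max_eq_left hx, Real.norm_of_nonneg hx]

lemma posL1Norm_eq_zero_of_nonpos {f : Lp ℝ 1 (volume : Measure ℝ)} (hf : ∀ᵐ x, f x ≤ 0) :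
    posL1Norm f = 0 := by
  refine integral_eq_zero_of_ae ?_
  filter_upwards [hf] with x hx
  exact max_eq_right hx

lemma iocIndicator_nonneg (a b : ℝ) : ∀ᵐ x, 0 ≤ iocIndicator a b x := by
  filter_upwards [indicatorConstLp_coeFn (p := 1) (μ := volume)
    (hs := measurableSet_Ioc (a := a) (b := b)) (hμs := measure_Ioc_lt_top.ne) (c := (1 : ℝ))]
    with x hx
  exact hx ▸ indicator_nonneg (fun _ _ ↦ zero_le_one) x

lemma norm_iocIndicator {a b : ℝ} (hab : a ≤ b) : ‖iocIndicator a b‖ = b - a := by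
  rw [iocIndicator, norm_indicatorConstLp one_ne_zero ENNReal.one_ne_top]
  simp [hab]

variable {φ : Lp ℝ 1 (volume : Measure ℝ) →ₗ[ℝ] ℝ} {M : ℝ}

lemma nonneg_of_le_mul_posL1Norm (hbd : ∀ f, φ f ≤ M * posL1Norm f)
    {f : Lp ℝ 1 (volume : Measure ℝ)} (hf : ∀ᵐ x, 0 ≤ f x) : 0 ≤ φ f := by
  have h := hbd (-f)
  rw [posL1Norm_eq_zero_of_nonpos, map_neg, mul_zero] at h
  · exact neg_nonpos.1 h
  filter_upwards [Lp.coeFn_neg f, hf] with x hx hfx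
  rw [hx, Pi.neg_apply, neg_nonpos]
  exact hfx

lemma abs_le_mul_norm_of_le_mul_posL1Norm (hM : 0 ≤ M) (hbd : ∀ f, φ f ≤ M * posL1Norm f)
    (f : Lp ℝ 1 (volume : Measure ℝ)) : |φ f| ≤ M * ‖f‖ := by
  have h₁ := (hbd f).trans (mul_le_mul_of_nonneg_left (posL1Norm_le_norm f) hM)
  have h₂ := (hbd (-f)).trans (mul_le_mul_of_nonneg_left (posL1Norm_le_norm (-f)) hM)
  rw [map_neg, norm_neg] at h₂
  exact abs_le.2 ⟨by linarith, h₁⟩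

lemma exists_nonneg_integral_mul_eq (hM : 0 ≤ M) (hbd : ∀ f, φ f ≤ M * posL1Norm f) :
    ∃ g : Lp ℝ ∞ (volume : Measure ℝ), (∀ᵐ x, 0 ≤ g x) ∧
      ∀ f : Lp ℝ 1 (volume : Measure ℝ), φ f = ∫ x, g x * f x := by
  have hpos : ∀ a b, 0 ≤ φ (iocIndicator a b) := fun a b ↦
    nonneg_of_le_mul_posL1Norm hbd (iocIndicator_nonneg a b)
  have hle : ∀ a b, a ≤ b → φ (iocIndicator a b) ≤ M * (b - a) := fun a b hab ↦ by
    simpa [posL1Norm_eq_norm_of_nonneg (iocIndicator_nonneg a b), norm_iocIndicator hab]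
      using hbd (iocIndicator a b)
  set ν := (distribStieltjes hpos hle).measure
  have hν : ν ≤ M.toNNReal • volume := distribStieltjes_measure_le hpos hle hM
  have hmem := Measure.memLp_top_toReal_rnDeriv_of_le_smul hν
  set g := hmem.toLp
  refine ⟨g, ?_, fun f ↦ ?_⟩
  · filter_upwards [hmem.coeFn_toLp] with x hx
    exact hx ▸ ENNReal.toReal_nonneg
  let ψ := (ContinuousLinearMap.mul ℝ ℝ).lpPairing volume ∞ 1 g
  have hψ : ∀ f, ψ f = ∫ x, g x * f x := fun f ↦ by
    simp [ψ, ContinuousLinearMap.lpPairing_eq_integral]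
  have hφψ : φ.mkContinuous M (fun f ↦ abs_le_mul_norm_of_le_mul_posL1Norm hM hbd f) = ψ := by
    refine ContinuousLinearMap.ext_iocIndicator fun a b ↦ ?_
    rw [LinearMap.mkContinuous_apply, hψ, iocIndicator, integral_mul_indicatorConstLp, mul_one,
      setIntegral_congr_ae measurableSet_Ioc (hmem.coeFn_toLp.mono fun x hx _ ↦ hx),
      Measure.setIntegral_toReal_rnDeriv (Measure.absolutelyContinuous_of_le_smul hν),
      measureReal_def, distribStieltjes_measure_Ioc, ENNReal.toReal_ofReal (hpos a b)]
    rfl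
  rw [← hψ, ← hφψ, LinearMap.mkContinuous_apply]

end Representation

/-- The dual cone of `(L¹(ℝ), ‖·|_{1,+})` is (isometrically) the cone
`L^∞₊(ℝ)`: every linear functional `φ` with `φ f ≤ M ‖f|_{1,+}` is represented
by a unique a.e. nonnegative `g ∈ L^∞`, and the dual conic norm of `φ` equals
`‖g‖_∞`. -/
theorem dual_of_asymmetric_L1 (φ : Lp ℝ 1 (volume : Measure ℝ) →ₗ[ℝ] ℝ)
    (M : ℝ) (hM : 0 ≤ M)
    (hbd : ∀ f : Lp ℝ 1 (volume : Measure ℝ), φ f ≤ M * posL1Norm f) :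
    ∃! g : Lp ℝ ⊤ (volume : Measure ℝ),
      (∀ᵐ x ∂(volume : Measure ℝ), 0 ≤ g x) ∧
      (∀ f : Lp ℝ 1 (volume : Measure ℝ), φ f = ∫ x, g x * f x) ∧
      sSup {r : ℝ | ∃ f : Lp ℝ 1 (volume : Measure ℝ), posL1Norm f ≤ 1 ∧ r = φ f} = ‖g‖ := by
  obtain ⟨g, hg, hrepr⟩ := exists_nonneg_integral_mul_eq hM hbd
  refine ⟨g, ⟨hg, hrepr, ?_⟩, fun g' ⟨_, hrepr', _⟩ ↦
    Lp.eq_of_forall_integral_mul_eq fun f ↦ (hrepr' f).symm.trans (hrepr f)⟩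
  simp only [hrepr]
  exact sSup_integral_mul_eq_norm hg
end

section
/- Let (X,D) be a metric space with base point x₀, L = Lip₀(X,D), and P ⊆ L a cone such that every φ ∈ L decomposes as φ = φ₁ - φ₂ with φ₁,φ₂ ∈ P and max{‖φ₁‖_L, ‖φ₂‖_L} ≤ ‖φ‖_L. Define the P-asymmetrization D_P(x,y) = sup{φ(y) - φ(x) : φ ∈ P, ‖φ‖_L ≤ 1}. Then the symmetrization D_P^s(x,y) = D_P(x,y) + D_P(y,x) satisfies D(x,y) ≤ D_P^s(x,y) ≤ 2D(x,y) for all x,y ∈ X; in particular D_P^s and D are bi-Lipschitz equivalent. -/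
/-- The Lipschitz norm of a real-valued function on a metric space. -/
noncomputable def lipNorm {X : Type*} [MetricSpace X] (φ : X → ℝ) : ℝ :=
  sInf {K : ℝ | 0 ≤ K ∧ ∀ x y, |φ x - φ y| ≤ K * dist x y}

/-- The `P`-asymmetrization of the distance of a metric space. -/
noncomputable def DP {X : Type*} [MetricSpace X] (P : Set (X → ℝ)) (x y : X) : ℝ :=
  sSup {r : ℝ | ∃ φ ∈ P, lipNorm φ ≤ 1 ∧ r = φ y - φ x}

/-!
The upper bound holds because every `φ ∈ P` with `‖φ‖_L ≤ 1` satisfies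
`φ y - φ x ≤ D(x,y)`. For the lower bound, decompose the 1-Lipschitz function
`z ↦ D(z,x) - D(x₀,x)` as `φ₁ - φ₂` with `φ₁, φ₂ ∈ P` of norm at most 1; then
`D(x,y) = (φ₁ y - φ₁ x) + (φ₂ x - φ₂ y) ≤ D_P(x,y) + D_P(y,x)`.
-/

section LipNorm

variable {X : Type*} [MetricSpace X]

theorem lipNorm_le {φ : X → ℝ} {K : ℝ} (hK : 0 ≤ K)
    (h : ∀ x y, |φ x - φ y| ≤ K * dist x y) : lipNorm φ ≤ K :=
  csInf_le ⟨0, fun _ hK => hK.1⟩ ⟨hK, h⟩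

theorem abs_sub_le_lipNorm_mul_dist {φ : X → ℝ}
    (h : ∃ K : ℝ, 0 ≤ K ∧ ∀ x y, |φ x - φ y| ≤ K * dist x y) (x y : X) :
    |φ x - φ y| ≤ lipNorm φ * dist x y := by
  obtain rfl | hxy := eq_or_ne x y
  · simp
  have hd : 0 < dist x y := dist_pos.2 hxy
  have hquot : |φ x - φ y| / dist x y ≤ lipNorm φ := by
    obtain ⟨K, hK⟩ := h
    refine le_csInf ⟨K, hK⟩ fun L hL => ?_
    rw [div_le_iff₀ hd]
    exact hL.2 x y
  rwa [div_le_iff₀ hd] at hquot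

theorem sub_le_dist_of_lipNorm_le_one {φ : X → ℝ}
    (h : ∃ K : ℝ, 0 ≤ K ∧ ∀ x y, |φ x - φ y| ≤ K * dist x y)
    (hφ : lipNorm φ ≤ 1) (x y : X) : φ y - φ x ≤ dist x y :=
  calc φ y - φ x ≤ |φ y - φ x| := le_abs_self _
    _ ≤ lipNorm φ * dist y x := abs_sub_le_lipNorm_mul_dist h y x
    _ ≤ dist x y := by
      rw [dist_comm]
      exact mul_le_of_le_one_left dist_nonneg hφ

end LipNorm

section Asymmetrization

variable {X : Type*} [MetricSpace X] {P : Set (X → ℝ)}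

theorem DP_le_dist
    (hPlip : ∀ φ ∈ P, ∃ K : ℝ, 0 ≤ K ∧ ∀ x y, |φ x - φ y| ≤ K * dist x y)
    (x y : X) : DP P x y ≤ dist x y := by
  refine Real.sSup_le ?_ dist_nonneg
  rintro _ ⟨φ, hφP, hφ, rfl⟩
  exact sub_le_dist_of_lipNorm_le_one (hPlip φ hφP) hφ x y

theorem sub_le_DP
    (hPlip : ∀ φ ∈ P, ∃ K : ℝ, 0 ≤ K ∧ ∀ x y, |φ x - φ y| ≤ K * dist x y)
    {φ : X → ℝ} (hφP : φ ∈ P) (hφ : lipNorm φ ≤ 1) (x y : X) :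
    φ y - φ x ≤ DP P x y := by
  refine le_csSup ⟨dist x y, ?_⟩ ⟨φ, hφP, hφ, rfl⟩
  rintro _ ⟨ψ, hψP, hψ, rfl⟩
  exact sub_le_dist_of_lipNorm_le_one (hPlip ψ hψP) hψ x y

theorem dist_le_DP_add_DP (x₀ : X)
    (hPlip : ∀ φ ∈ P, ∃ K : ℝ, 0 ≤ K ∧ ∀ x y, |φ x - φ y| ≤ K * dist x y)
    (hdec : ∀ φ : X → ℝ, φ x₀ = 0 →
      (∃ K : ℝ, 0 ≤ K ∧ ∀ x y, |φ x - φ y| ≤ K * dist x y) →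
      ∃ φ₁ ∈ P, ∃ φ₂ ∈ P, φ = φ₁ - φ₂ ∧
        max (lipNorm φ₁) (lipNorm φ₂) ≤ lipNorm φ)
    (x y : X) : dist x y ≤ DP P x y + DP P y x := by
  have hlip : ∀ a b, |(dist a x - dist x₀ x) - (dist b x - dist x₀ x)| ≤ 1 * dist a b :=
    fun a b => by simpa using abs_dist_sub_le a b x
  obtain ⟨φ₁, hφ₁P, φ₂, hφ₂P, hsplit, hnorm⟩ :=
    hdec (fun z => dist z x - dist x₀ x) (sub_self _) ⟨1, zero_le_one, hlip⟩
  have hnorm_le_one : max (lipNorm φ₁) (lipNorm φ₂) ≤ 1 :=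
    hnorm.trans (lipNorm_le zero_le_one hlip)
  have hdiff : dist x y = (φ₁ y - φ₁ x) + (φ₂ x - φ₂ y) := by
    have hy := congrFun hsplit y
    have hx := congrFun hsplit x
    simp only [Pi.sub_apply, dist_self] at hx hy
    linarith [dist_comm x y]
  rw [hdiff]
  exact add_le_add (sub_le_DP hPlip hφ₁P (le_of_max_le_left hnorm_le_one) x y)
    (sub_le_DP hPlip hφ₂P (le_of_max_le_right hnorm_le_one) y x)

end Asymmetrization

theorem P_asymmetrization_symmetrization_equiv_general
    {X : Type*} [MetricSpace X] (x₀ : X) (P : Set (X → ℝ))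
    (hPlip : ∀ φ ∈ P, ∃ K : ℝ, 0 ≤ K ∧ ∀ x y, |φ x - φ y| ≤ K * dist x y)
    (hdec : ∀ φ : X → ℝ, φ x₀ = 0 →
      (∃ K : ℝ, 0 ≤ K ∧ ∀ x y, |φ x - φ y| ≤ K * dist x y) →
      ∃ φ₁ ∈ P, ∃ φ₂ ∈ P, φ = φ₁ - φ₂ ∧
        max (lipNorm φ₁) (lipNorm φ₂) ≤ lipNorm φ) :
    ∀ x y : X, dist x y ≤ DP P x y + DP P y x ∧
      DP P x y + DP P y x ≤ 2 * dist x y := by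
  intro x y
  refine ⟨dist_le_DP_add_DP x₀ hPlip hdec x y, ?_⟩
  have hxy := DP_le_dist hPlip x y
  have hyx := DP_le_dist hPlip y x
  rw [dist_comm] at hyx
  linarith

/-- If `P ⊆ Lip₀(X,D)` is a cone with the decomposition property, then the
symmetrization `D_P^s` of the `P`-asymmetrization satisfies
`D ≤ D_P^s ≤ 2 D`; in particular `D_P^s` and `D` are bi-Lipschitz
equivalent. -/
theorem P_asymmetrization_symmetrization_equiv
    {X : Type*} [MetricSpace X] (x₀ : X) (P : Set (X → ℝ))
    (hP0 : ∀ φ ∈ P, φ x₀ = 0)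
    (hPlip : ∀ φ ∈ P, ∃ K : ℝ, 0 ≤ K ∧ ∀ x y, |φ x - φ y| ≤ K * dist x y)
    (hPadd : ∀ φ ∈ P, ∀ ψ ∈ P, φ + ψ ∈ P)
    (hPsmul : ∀ φ ∈ P, ∀ c : ℝ, 0 ≤ c → c • φ ∈ P)
    (hdec : ∀ φ : X → ℝ, φ x₀ = 0 →
      (∃ K : ℝ, 0 ≤ K ∧ ∀ x y, |φ x - φ y| ≤ K * dist x y) →
      ∃ φ₁ ∈ P, ∃ φ₂ ∈ P, φ = φ₁ - φ₂ ∧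
        max (lipNorm φ₁) (lipNorm φ₂) ≤ lipNorm φ) :
    ∀ x y : X, dist x y ≤ DP P x y + DP P y x ∧
      DP P x y + DP P y x ≤ 2 * dist x y :=
  P_asymmetrization_symmetrization_equiv_general x₀ P hPlip hdec
end

section
/- The map T : (ℒ^∞₊(ℝ), ‖·‖_∞) → (SLip₀(ℝ,u), ‖·|_S) defined by Tg(x) = ∫₀ˣ g dλ is a surjective isometric isomorphism of normed cones: T is additive, positively homogeneous, bijective, and ‖Tg|_S = ‖g‖_∞ for every g ∈ ℒ^∞₊(ℝ). -/
open MeasureTheory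

/-- The semi-Lipschitz constant of a function on `(ℝ, u)`. -/
noncomputable def sConst (f : ℝ → ℝ) : ℝ :=
  sInf {L : ℝ | 0 ≤ L ∧ ∀ x y, f x - f y ≤ L * max (x - y) 0}

/-- The map `T g = (x ↦ ∫₀ˣ g)`. -/
noncomputable def Tmap (g : ℝ → ℝ) : ℝ → ℝ := fun x => ∫ t in (0 : ℝ)..x, g t

/-!
A semi-Lipschitz function on `(ℝ, u)` is monotone with slopes at most `L`, hence `L`-Lipschitz
and absolutely continuous, so it is the primitive of its derivative, which lies in `[0, L]`.
Conversely, by the Lebesgue differentiation theorem `g` is a.e. the derivative of `T g`, which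
gives injectivity, and a semi-Lipschitz constant `L` of `T g` bounds `g` a.e., so `‖g‖_∞ ≤ L`;
the reverse bound `T g x - T g y ≤ ‖g‖_∞ (x - y)` for `y ≤ x` is immediate.
-/

open Set Filter

/-- Semi-Lipschitz for the paper's quasi-metric `u(x, y) = max (x - y) 0` on `ℝ`. -/
def SemiLipschitzWith (L : ℝ) (f : ℝ → ℝ) : Prop :=
  ∀ x y, f x - f y ≤ L * max (x - y) 0

namespace SemiLipschitzWith

variable {L : ℝ} {f : ℝ → ℝ}

lemma sub_le_of_le (hf : SemiLipschitzWith L f) {x y : ℝ} (hxy : x ≤ y) :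
    f y - f x ≤ L * (y - x) := by
  simpa [max_eq_left (sub_nonneg.2 hxy)] using hf y x

lemma monotone (hf : SemiLipschitzWith L f) : Monotone f := fun x y hxy => by
  simpa [max_eq_right (sub_nonpos.2 hxy)] using hf x y

lemma nonneg (hf : SemiLipschitzWith L f) : 0 ≤ L := by
  have := hf.sub_le_of_le zero_le_one
  linarith [hf.monotone zero_le_one]

lemma lipschitzWith (hf : SemiLipschitzWith L f) : LipschitzWith ⟨L, hf.nonneg⟩ f := by
  refine LipschitzWith.of_dist_le_mul fun x y => ?_
  wlog hxy : x ≤ y generalizing x y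
  · rw [dist_comm, dist_comm x]
    exact this y x (le_of_not_ge hxy)
  rw [dist_comm, dist_comm x, Real.dist_eq, Real.dist_eq,
    abs_of_nonneg (sub_nonneg.2 (hf.monotone hxy)), abs_of_nonneg (sub_nonneg.2 hxy)]
  exact hf.sub_le_of_le hxy

lemma le_of_hasDerivAt (hf : SemiLipschitzWith L f) {f' x : ℝ} (hd : HasDerivAt f f' x) :
    f' ≤ L :=
  (le_abs_self f').trans (hd.le_of_lipschitz hf.lipschitzWith)

lemma memLp_deriv (hf : SemiLipschitzWith L f) : MemLp (deriv f) ⊤ volume :=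
  memLp_top_of_bound (measurable_deriv f).aestronglyMeasurable L
    (Eventually.of_forall fun _ => norm_deriv_le_of_lipschitz hf.lipschitzWith)

lemma integral_deriv (hf : SemiLipschitzWith L f) (a b : ℝ) :
    ∫ t in a..b, deriv f t = f b - f a :=
  hf.lipschitzWith.lipschitzOnWith.absolutelyContinuousOnInterval.integral_deriv_eq_sub

lemma Tmap_deriv (hf : SemiLipschitzWith L f) (h0 : f 0 = 0) : Tmap (deriv f) = f := by
  funext x
  rw [Tmap, hf.integral_deriv, h0, sub_zero]

end SemiLipschitzWith

lemma ae_le_toReal_eLpNorm_top {α : Type*} [MeasurableSpace α] {μ : Measure α} {g : α → ℝ}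
    (hg : MemLp g ⊤ μ) : ∀ᵐ x ∂μ, g x ≤ (eLpNorm g ⊤ μ).toReal := by
  filter_upwards [ae_le_lpNorm_exponent_top hg] with x hx
  rw [toReal_eLpNorm hg.aestronglyMeasurable]
  exact (le_abs_self _).trans hx

lemma toReal_eLpNorm_top_le {α E : Type*} [MeasurableSpace α] [NormedAddCommGroup E]
    {μ : Measure α} {g : α → E} {L : ℝ} (hL : 0 ≤ L) (h : ∀ᵐ x ∂μ, ‖g x‖ ≤ L) :
    (eLpNorm g ⊤ μ).toReal ≤ L :=
  ENNReal.toReal_le_of_le_ofReal hL (by simpa using eLpNorm_le_of_ae_bound (p := ⊤) h)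

lemma MeasureTheory.LocallyIntegrable.intervalIntegrable {E : Type*} [NormedAddCommGroup E]
    {μ : Measure ℝ} {g : ℝ → E} (hg : LocallyIntegrable g μ) (a b : ℝ) :
    IntervalIntegrable g μ a b :=
  (hg.integrableOn_isCompact isCompact_uIcc).intervalIntegrable

section Tmap

variable {g g' : ℝ → ℝ}

lemma Tmap_apply_zero (g : ℝ → ℝ) : Tmap g 0 = 0 :=
  intervalIntegral.integral_same

lemma Tmap_sub_Tmap (hg : LocallyIntegrable g volume) (a b : ℝ) :
    Tmap g b - Tmap g a = ∫ t in a..b, g t :=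
  intervalIntegral.integral_interval_sub_left (hg.intervalIntegrable 0 b)
    (hg.intervalIntegrable 0 a)

lemma Tmap_add (hg : LocallyIntegrable g volume) (hg' : LocallyIntegrable g' volume) :
    Tmap (g + g') = Tmap g + Tmap g' :=
  funext fun x => intervalIntegral.integral_add (hg.intervalIntegrable 0 x)
    (hg'.intervalIntegrable 0 x)

lemma Tmap_smul (c : ℝ) (g : ℝ → ℝ) : Tmap (c • g) = c • Tmap g :=
  funext fun _ => intervalIntegral.integral_smul c g

lemma ae_hasDerivAt_Tmap (hg : LocallyIntegrable g volume) :
    ∀ᵐ x, HasDerivAt (Tmap g) (g x) x :=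
  (LocallyIntegrable.ae_hasDerivAt_integral hg).mono fun _ hx => hx 0

lemma ae_eq_of_Tmap_eq (hg : LocallyIntegrable g volume) (hg' : LocallyIntegrable g' volume)
    (h : Tmap g = Tmap g') : g =ᵐ[volume] g' := by
  filter_upwards [ae_hasDerivAt_Tmap hg, ae_hasDerivAt_Tmap hg'] with x hx hx'
  exact hx.unique (h ▸ hx')

lemma semiLipschitzWith_Tmap {M : ℝ} (hg : LocallyIntegrable g volume)
    (hg0 : ∀ᵐ x, 0 ≤ g x) (hgM : ∀ᵐ x, g x ≤ M) : SemiLipschitzWith M (Tmap g) := by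
  intro x y
  rcases le_total y x with hyx | hxy
  · rw [max_eq_left (sub_nonneg.2 hyx), Tmap_sub_Tmap hg]
    calc ∫ t in y..x, g t ≤ ∫ _ in y..x, M :=
          intervalIntegral.integral_mono_ae hyx (hg.intervalIntegrable y x)
            intervalIntegrable_const hgM
      _ = M * (x - y) := by rw [intervalIntegral.integral_const, smul_eq_mul, mul_comm]
  · have : 0 ≤ Tmap g y - Tmap g x := by
      rw [Tmap_sub_Tmap hg]
      exact intervalIntegral.integral_nonneg_of_ae hxy hg0
    rw [max_eq_right (sub_nonpos.2 hxy), mul_zero]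
    linarith

lemma SemiLipschitzWith.ae_le_of_Tmap {L : ℝ} (hg : LocallyIntegrable g volume)
    (hL : SemiLipschitzWith L (Tmap g)) : ∀ᵐ x, g x ≤ L :=
  (ae_hasDerivAt_Tmap hg).mono fun _ hx => hL.le_of_hasDerivAt hx

lemma sConst_Tmap (hg : MemLp g ⊤ volume) (hg0 : ∀ᵐ x, 0 ≤ g x) :
    sConst (Tmap g) = (eLpNorm g ⊤ volume).toReal := by
  refine IsLeast.csInf_eq ⟨⟨ENNReal.toReal_nonneg, semiLipschitzWith_Tmap
    (hg.locallyIntegrable le_top) hg0 (ae_le_toReal_eLpNorm_top hg)⟩, fun L ⟨hL0, hL⟩ => ?_⟩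
  refine toReal_eLpNorm_top_le hL0 ?_
  filter_upwards [hg0, SemiLipschitzWith.ae_le_of_Tmap (hg.locallyIntegrable le_top) hL]
    with x h0 hx
  rwa [Real.norm_of_nonneg h0]

end Tmap

/-- The map `T : (L^∞₊(ℝ), ‖·‖_∞) → (SLip₀(ℝ,u), ‖·|_S)`, `Tg(x) = ∫₀ˣ g`, is
an additive, positively homogeneous, bijective isometry of normed cones. -/
theorem T_isometric_isomorphism :
    -- T maps into SLip₀(ℝ,u) and is an isometry
    (∀ g : ℝ → ℝ, MemLp g ⊤ (volume : Measure ℝ) →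
      (∀ᵐ x ∂(volume : Measure ℝ), 0 ≤ g x) →
      Tmap g 0 = 0 ∧
      (∃ L : ℝ, 0 ≤ L ∧ ∀ x y, Tmap g x - Tmap g y ≤ L * max (x - y) 0) ∧
      sConst (Tmap g) = (eLpNorm g ⊤ (volume : Measure ℝ)).toReal) ∧
    -- additivity
    (∀ g g' : ℝ → ℝ, MemLp g ⊤ (volume : Measure ℝ) →
      MemLp g' ⊤ (volume : Measure ℝ) →
      (∀ᵐ x ∂(volume : Measure ℝ), 0 ≤ g x) →
      (∀ᵐ x ∂(volume : Measure ℝ), 0 ≤ g' x) →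
      Tmap (g + g') = Tmap g + Tmap g') ∧
    -- positive homogeneity
    (∀ (c : ℝ), 0 ≤ c → ∀ g : ℝ → ℝ, MemLp g ⊤ (volume : Measure ℝ) →
      (∀ᵐ x ∂(volume : Measure ℝ), 0 ≤ g x) →
      Tmap (c • g) = c • Tmap g) ∧
    -- injectivity (up to a.e. equality, i.e. as elements of L^∞)
    (∀ g g' : ℝ → ℝ, MemLp g ⊤ (volume : Measure ℝ) →
      MemLp g' ⊤ (volume : Measure ℝ) →
      (∀ᵐ x ∂(volume : Measure ℝ), 0 ≤ g x) →
      (∀ᵐ x ∂(volume : Measure ℝ), 0 ≤ g' x) →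
      Tmap g = Tmap g' → g =ᵐ[(volume : Measure ℝ)] g') ∧
    -- surjectivity onto SLip₀(ℝ,u)
    (∀ f : ℝ → ℝ, f 0 = 0 →
      (∃ L : ℝ, 0 ≤ L ∧ ∀ x y, f x - f y ≤ L * max (x - y) 0) →
      ∃ g : ℝ → ℝ, MemLp g ⊤ (volume : Measure ℝ) ∧
        (∀ᵐ x ∂(volume : Measure ℝ), 0 ≤ g x) ∧ Tmap g = f) := by
  refine ⟨fun g hg hg0 => ?_, fun g g' hg hg' _ _ => ?_, fun c _ g _ _ => Tmap_smul c g,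
    fun g g' hg hg' _ _ h => ?_, ?_⟩
  · exact ⟨Tmap_apply_zero g, ⟨_, ENNReal.toReal_nonneg, semiLipschitzWith_Tmap
      (hg.locallyIntegrable le_top) hg0 (ae_le_toReal_eLpNorm_top hg)⟩, sConst_Tmap hg hg0⟩
  · exact Tmap_add (hg.locallyIntegrable le_top) (hg'.locallyIntegrable le_top)
  · exact ae_eq_of_Tmap_eq (hg.locallyIntegrable le_top) (hg'.locallyIntegrable le_top) h
  · rintro f hf0 ⟨L, -, hf⟩
    exact ⟨deriv f, SemiLipschitzWith.memLp_deriv hf,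
      ae_of_all _ fun _ => (SemiLipschitzWith.monotone hf).deriv_nonneg,
      SemiLipschitzWith.Tmap_deriv hf hf0⟩
end
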